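/- Let (f_k)_{k∈ℕ} be a frame sequence in H with synthesis operator T and Gram operator G = T* T, and let T†, (T*)† and G† denote the Moore-Penrose pseudoinverses of T, T* and G. Then (T*)† = T ∘ G†, T† = G† ∘ T*, and T† ∘ (T†)* = G†. -/

import Mathlib

/- Setting: `H` is a complex Hilbert space, `ℓ2` is the Hilbert space of square-summable
complex sequences with standard orthonormal basis `lp.single 2 k 1`. -/

noncomputable section

abbrev ℓ2 : Type := lp (fun _ : ℕ => ℂ) 2

variable {H : Type} [NormedAddCommGroup H] [InnerProductSpace ℂ H] [CompleteSpace H]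

/-- The closed linear span `V` of the set of values of the sequence `f`. -/
def spanClosure (f : ℕ → H) : Submodule ℂ H :=
  (Submodule.span ℂ (Set.range f)).topologicalClosure

instance (f : ℕ → H) : CompleteSpace (spanClosure f) :=
  Submodule.topologicalClosure.completeSpace _

/-- `f` is a frame sequence with frame bounds `A`, `B`:  the frame inequality
`A‖g‖² ≤ ∑ₖ |⟨g, fₖ⟩|² ≤ B‖g‖²` holds for every `g` in the closed linear span `V` of the `fₖ`.
(In Mathlib's convention, the paper's `⟨g, fₖ⟩`, linear in the first argument, is `⟪fₖ, g⟫`.) -/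
def IsFrameSeqWith (f : ℕ → H) (A B : ℝ) : Prop :=
  0 < A ∧ 0 < B ∧
    ∀ g ∈ spanClosure f,
      Summable (fun k => ‖(inner ℂ (f k) g : ℂ)‖ ^ 2) ∧
      A * ‖g‖ ^ 2 ≤ ∑' k, ‖(inner ℂ (f k) g : ℂ)‖ ^ 2 ∧
      (∑' k, ‖(inner ℂ (f k) g : ℂ)‖ ^ 2) ≤ B * ‖g‖ ^ 2

/-- `Ad` is the Moore–Penrose pseudoinverse of the bounded operator `A`:
`A A† A = A`, `A† A A† = A†`, `(A A†)* = A A†` and `(A† A)* = A† A`. -/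
def IsMoorePenrose {E F : Type} [NormedAddCommGroup E] [InnerProductSpace ℂ E] [CompleteSpace E]
    [NormedAddCommGroup F] [InnerProductSpace ℂ F] [CompleteSpace F]
    (A : E →L[ℂ] F) (Ad : F →L[ℂ] E) : Prop :=
  A ∘L Ad ∘L A = A ∧ Ad ∘L A ∘L Ad = Ad ∧
  ContinuousLinearMap.adjoint (A ∘L Ad) = A ∘L Ad ∧
  ContinuousLinearMap.adjoint (Ad ∘L A) = Ad ∘L A

/-! Moore–Penrose pseudoinverses are unique and commute with taking adjoints, so `G† = (T*T)†`
is self-adjoint and commutes with `G`. Since `ker (T*T) = ker T`, the identity `G G† G = G`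
upgrades to `T G† G = T`; with it the four Moore–Penrose equations of `T*` are checked directly
for `T G†`. Taking adjoints gives `T† = G† T*`, and then `T† (T†)* = G† G G† = G†`. -/

open ContinuousLinearMap

section MoorePenrose

variable {E F : Type} [NormedAddCommGroup E] [InnerProductSpace ℂ E] [CompleteSpace E]
  [NormedAddCommGroup F] [InnerProductSpace ℂ F] [CompleteSpace F]

theorem IsMoorePenrose.unique {A : E →L[ℂ] F} {Ad Ad' : F →L[ℂ] E}
    (h : IsMoorePenrose A Ad) (h' : IsMoorePenrose A Ad') : Ad = Ad' := by
  obtain ⟨h₁, h₂, h₃, h₄⟩ := h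
  obtain ⟨h'₁, h'₂, h'₃, h'₄⟩ := h'
  have hleft : A ∘L Ad = A ∘L Ad' :=
    calc A ∘L Ad = (A ∘L Ad') ∘L (A ∘L Ad) := by
          conv_lhs => rw [← h'₁]
          simp only [comp_assoc]
      _ = adjoint ((A ∘L Ad) ∘L (A ∘L Ad')) := by rw [adjoint_comp, h₃, h'₃]
      _ = A ∘L Ad' := by
          conv_rhs => rw [← h'₃, ← h₁]
          simp only [comp_assoc]
  have hright : Ad ∘L A = Ad' ∘L A :=
    calc Ad ∘L A = (Ad ∘L A) ∘L (Ad' ∘L A) := by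
          conv_lhs => rw [← h'₁]
          simp only [comp_assoc]
      _ = adjoint ((Ad' ∘L A) ∘L (Ad ∘L A)) := by rw [adjoint_comp, h₄, h'₄]
      _ = Ad' ∘L A := by
          conv_rhs => rw [← h'₄, ← h₁]
          simp only [comp_assoc]
  calc Ad = Ad ∘L A ∘L Ad' := by rw [← hleft, h₂]
    _ = Ad' := by rw [← comp_assoc, hright, comp_assoc, h'₂]

theorem isMoorePenrose_adjoint {A : E →L[ℂ] F} {Ad : F →L[ℂ] E} (h : IsMoorePenrose A Ad) :
    IsMoorePenrose (adjoint A) (adjoint Ad) := by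
  obtain ⟨h₁, h₂, h₃, h₄⟩ := h
  refine ⟨?_, ?_, ?_, ?_⟩
  · simpa only [adjoint_comp, comp_assoc] using congrArg adjoint h₁
  · simpa only [adjoint_comp, comp_assoc] using congrArg adjoint h₂
  · rw [← adjoint_comp, h₄, h₄]
  · rw [← adjoint_comp, h₃, h₃]

variable {A Ad : E →L[ℂ] E}

theorem IsMoorePenrose.isSelfAdjoint (hA : IsSelfAdjoint A) (h : IsMoorePenrose A Ad) :
    IsSelfAdjoint Ad := by
  rw [isSelfAdjoint_iff'] at hA ⊢
  exact h.unique (hA ▸ isMoorePenrose_adjoint h) |>.symm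

theorem IsMoorePenrose.comp_comm (hA : IsSelfAdjoint A) (h : IsMoorePenrose A Ad) :
    Ad ∘L A = A ∘L Ad := by
  have hAd := isSelfAdjoint_iff'.mp (h.isSelfAdjoint hA)
  rw [← h.2.2.2, adjoint_comp, isSelfAdjoint_iff'.mp hA, hAd]

variable {T : E →L[ℂ] F} {Gd : E →L[ℂ] E}

theorem IsMoorePenrose.adjoint_eq_of_adjoint_comp_self
    (h : IsMoorePenrose (adjoint T ∘L T) Gd) : adjoint Gd = Gd :=
  isSelfAdjoint_iff'.mp (h.isSelfAdjoint (isPositive_adjoint_comp_self T).isSelfAdjoint)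

-- `x - Gd (T* T x)` lies in `ker (T* T) = ker T`.
theorem IsMoorePenrose.self_comp_comp_adjoint_comp_self
    (h : IsMoorePenrose (adjoint T ∘L T) Gd) :
    T ∘L Gd ∘L adjoint T ∘L T = T := by
  ext x
  have hGGd : adjoint T (T (Gd (adjoint T (T x)))) = adjoint T (T x) := congrArg (· x) h.1
  have hker : x - Gd (adjoint T (T x)) ∈ (adjoint T ∘L T).ker :=
    LinearMap.sub_mem_ker_iff.mpr hGGd.symm
  rw [ker_adjoint_comp_self, LinearMap.sub_mem_ker_iff] at hker
  exact hker.symm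

theorem IsMoorePenrose.adjoint_of_adjoint_comp_self (h : IsMoorePenrose (adjoint T ∘L T) Gd) :
    IsMoorePenrose (adjoint T) (T ∘L Gd) := by
  have hG := (isPositive_adjoint_comp_self T).isSelfAdjoint
  have hGd := h.adjoint_eq_of_adjoint_comp_self
  refine ⟨?_, ?_, ?_, ?_⟩
  · simpa only [adjoint_comp, adjoint_adjoint, hGd, comp_assoc] using
      congrArg adjoint h.self_comp_comp_adjoint_comp_self
  · simpa only [comp_assoc] using congrArg (T ∘L ·) h.2.1
  · rw [← comp_assoc, adjoint_comp, hGd, isSelfAdjoint_iff'.mp hG, h.comp_comm hG]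
  · rw [adjoint_comp, adjoint_comp, adjoint_adjoint, hGd, comp_assoc]

theorem IsMoorePenrose.of_adjoint_comp_self (h : IsMoorePenrose (adjoint T ∘L T) Gd) :
    IsMoorePenrose T (Gd ∘L adjoint T) := by
  simpa only [adjoint_adjoint, adjoint_comp, h.adjoint_eq_of_adjoint_comp_self] using
    isMoorePenrose_adjoint h.adjoint_of_adjoint_comp_self

end MoorePenrose

theorem stmt17_general (T : ℓ2 →L[ℂ] H)
    (G : ℓ2 →L[ℂ] ℓ2) (hG : G = ContinuousLinearMap.adjoint T ∘L T)
    (Tdag : H →L[ℂ] ℓ2) (hTdag : IsMoorePenrose T Tdag)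
    (Tsdag : ℓ2 →L[ℂ] H) (hTsdag : IsMoorePenrose (ContinuousLinearMap.adjoint T) Tsdag)
    (Gdag : ℓ2 →L[ℂ] ℓ2) (hGdag : IsMoorePenrose G Gdag) :
    Tsdag = T ∘L Gdag ∧
      Tdag = Gdag ∘L ContinuousLinearMap.adjoint T ∧
      Tdag ∘L ContinuousLinearMap.adjoint Tdag = Gdag := by
  subst hG
  have hTdag_eq : Tdag = Gdag ∘L adjoint T := hTdag.unique hGdag.of_adjoint_comp_self
  refine ⟨hTsdag.unique hGdag.adjoint_of_adjoint_comp_self, hTdag_eq, ?_⟩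
  rw [hTdag_eq, adjoint_comp, adjoint_adjoint, hGdag.adjoint_eq_of_adjoint_comp_self]
  simpa only [comp_assoc] using hGdag.2.1

/-- for a frame sequence with synthesis operator `T`, Gram operator
`G = T* T`, and Moore-Penrose pseudoinverses `T†`, `(T*)†`, `G†`:
`(T*)† = T ∘ G†`, `T† = G† ∘ T*` and `T† ∘ (T†)* = G†`. -/
theorem stmt17 (f : ℕ → H) (A B : ℝ) (hF : IsFrameSeqWith f A B)
    (T : ℓ2 →L[ℂ] H) (hT : ∀ c : ℓ2, HasSum (fun k => c k • f k) (T c))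
    (G : ℓ2 →L[ℂ] ℓ2) (hG : G = ContinuousLinearMap.adjoint T ∘L T)
    (Tdag : H →L[ℂ] ℓ2) (hTdag : IsMoorePenrose T Tdag)
    (Tsdag : ℓ2 →L[ℂ] H) (hTsdag : IsMoorePenrose (ContinuousLinearMap.adjoint T) Tsdag)
    (Gdag : ℓ2 →L[ℂ] ℓ2) (hGdag : IsMoorePenrose G Gdag) :
    Tsdag = T ∘L Gdag ∧
      Tdag = Gdag ∘L ContinuousLinearMap.adjoint T ∧
      Tdag ∘L ContinuousLinearMap.adjoint Tdag = Gdag :=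
  stmt17_general T G hG Tdag hTdag Tsdag hTsdag Gdag hGdag

end
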